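/- Suppose Wₙ = Tₙ Δₙ + Rₙ where Tₙ → T∞ in probability with T∞ invertible, √n Wₙ converges in distribution to N(0, S), and ‖Rₙ‖ ≤ ‖Δₙ‖ R(‖Δₙ‖) with probability tending to one for a continuous function R with R(0) = 0, and Δₙ → 0 in probability. Then √n Δₙ converges in distribution to N(0, T∞⁻¹ S T∞⁻ᵀ). -/

import Mathlib

/-!
Put `Yₙ = √n Δₙ` and `Xₙ = T∞⁻¹ (√n Wₙ)`; by the continuous mapping theorem `Xₙ` converges in
distribution to `T∞⁻¹ N(0, S)`, so by Slutsky it suffices that `Yₙ - Xₙ → 0` in probability.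
Where the remainder bound holds, `Yₙ - Xₙ = T∞⁻¹ ((T∞ - Tₙ) Yₙ - √n Rₙ)` has norm at most
`Aₙ ‖Yₙ‖` with `Aₙ = C (‖T∞ - Tₙ‖ + R ‖Δₙ‖) → 0` in probability. Once `Aₙ ≤ 1/2` this gives
`‖Yₙ‖ ≤ 2 ‖Xₙ‖`, hence `‖Yₙ - Xₙ‖ ≤ 2 Aₙ ‖Xₙ‖`, which is small in probability because `Xₙ`,
being convergent in distribution, is bounded in probability.
-/

open MeasureTheory Filter Topology

def CvgInDistrib {Ω V : Type*} [MeasurableSpace Ω] [PseudoMetricSpace V] [MeasurableSpace V]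
    (P : Measure Ω) (Z : ℕ → Ω → V) (μ : Measure V) : Prop :=
  ∀ f : BoundedContinuousFunction V ℝ,
    Tendsto (fun n => ∫ ω, f (Z n ω) ∂P) atTop (𝓝 (∫ x, f x ∂μ))

open scoped Matrix

lemma Matrix.norm_of_mulVec_le {m n α : Type*} [Fintype m] [Fintype n] [SeminormedRing α]
    (A : m → n → α) (v : n → α) :
    ‖Matrix.of A *ᵥ v‖ ≤ Fintype.card n * ‖A‖ * ‖v‖ := by
  refine (pi_norm_le_iff_of_nonneg (by positivity)).2 fun i => ?_
  calc ‖∑ j, A i j * v j‖ ≤ ∑ j, ‖A i j‖ * ‖v j‖ :=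
        (norm_sum_le _ _).trans (Finset.sum_le_sum fun j _ => norm_mul_le _ _)
    _ ≤ ∑ _j : n, ‖A‖ * ‖v‖ := Finset.sum_le_sum fun j _ =>
        mul_le_mul ((norm_le_pi_norm (A i) j).trans (norm_le_pi_norm A i))
          (norm_le_pi_norm v j) (norm_nonneg _) (norm_nonneg _)
    _ = Fintype.card n * ‖A‖ * ‖v‖ := by simp [mul_assoc]

lemma norm_smul_sub_mulVec_le_of_leftInverse {n : Type*} [Fintype n] {B B' T : n → n → ℝ}
    (hB' : ∀ v, Matrix.of B' *ᵥ (Matrix.of B *ᵥ v) = v) {δ r : n → ℝ} {c ρ : ℝ} (hc : 0 ≤ c)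
    (hr : ‖r‖ ≤ ‖δ‖ * ρ) :
    ‖c • δ - Matrix.of B' *ᵥ (c • (Matrix.of T *ᵥ δ + r))‖ ≤
      Fintype.card n * ‖B'‖ * (Fintype.card n * ‖B - T‖ + ρ) * ‖c • δ‖ := by
  have hlin : c • δ - Matrix.of B' *ᵥ (c • (Matrix.of T *ᵥ δ + r)) =
      Matrix.of B' *ᵥ (Matrix.of (B - T) *ᵥ (c • δ) - c • r) := by
    conv_lhs => rw [← hB' (c • δ)]
    rw [← Matrix.mulVec_sub, ← Matrix.of_sub_of, Matrix.sub_mulVec, Matrix.mulVec_smul]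
    congr 1
    rw [smul_add, Matrix.mulVec_smul]
    abel
  have hrem : ‖c • r‖ ≤ ρ * ‖c • δ‖ := by
    rw [norm_smul, norm_smul, Real.norm_of_nonneg hc]
    nlinarith
  rw [hlin]
  calc _ ≤ Fintype.card n * ‖B'‖ * ‖Matrix.of (B - T) *ᵥ (c • δ) - c • r‖ :=
        Matrix.norm_of_mulVec_le _ _
    _ ≤ Fintype.card n * ‖B'‖ * (Fintype.card n * ‖B - T‖ * ‖c • δ‖ + ρ * ‖c • δ‖) := by
        gcongr
        exact (norm_sub_le _ _).trans (add_le_add (Matrix.norm_of_mulVec_le _ _) hrem)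
    _ = _ := by ring

lemma aemeasurable_of_eq_mulVec_add {Ω n : Type*} [MeasurableSpace Ω] [Fintype n]
    {P : Measure Ω} {W Δ R : Ω → n → ℝ} {T : Ω → n → n → ℝ} (hW : AEMeasurable W P)
    (hT : Measurable T) (hΔ : Measurable Δ) (h : ∀ ω, W ω = Matrix.of (T ω) *ᵥ Δ ω + R ω) :
    AEMeasurable R P := by
  have hTΔ : Measurable fun ω => Matrix.of (T ω) *ᵥ Δ ω :=
    (Continuous.matrix_mulVec (continuous_fst (X := n → n → ℝ) (Y := n → ℝ))
      continuous_snd).measurable.comp (hT.prodMk hΔ)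
  have hR : R = fun ω => W ω - Matrix.of (T ω) *ᵥ Δ ω :=
    funext fun ω => by rw [h, add_sub_cancel_left]
  exact hR ▸ hW.sub hTΔ.aemeasurable

lemma norm_le_two_mul_of_norm_sub_le_mul {E : Type*} [SeminormedAddCommGroup E] {x y : E}
    {a : ℝ} (ha : a ≤ 1 / 2) (h : ‖y - x‖ ≤ a * ‖y‖) : ‖y‖ ≤ 2 * ‖x‖ := by
  nlinarith [norm_le_norm_add_norm_sub' y x, norm_nonneg y]

lemma tendsto_measure_of_subset_compl {ι Ω : Type*} [MeasurableSpace Ω] {P : Measure Ω}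
    [IsProbabilityMeasure P] {l : Filter ι} {s t : ι → Set Ω}
    (hs : ∀ᶠ i in l, NullMeasurableSet (s i) P) (h : Tendsto (fun i => P (s i)) l (𝓝 1))
    (hts : ∀ i, t i ⊆ (s i)ᶜ) : Tendsto (fun i => P (t i)) l (𝓝 0) := by
  have hsub := ENNReal.Tendsto.sub tendsto_const_nhds h (Or.inl ENNReal.one_ne_top)
  rw [tsub_self] at hsub
  refine tendsto_of_tendsto_of_tendsto_of_le_of_le' tendsto_const_nhds hsub
    (.of_forall fun _ => zero_le) (hs.mono fun i hi => ?_)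
  exact (measure_mono (hts i)).trans (prob_compl_eq_one_sub₀ hi).le

namespace MeasureTheory.TendstoInMeasure

variable {α ι E F : Type*} [MeasurableSpace α] {μ : Measure α} {l : Filter ι}

lemma prodMk [PseudoEMetricSpace E] [PseudoEMetricSpace F] {f : ι → α → E} {g : ι → α → F}
    {u : α → E} {v : α → F} (hf : TendstoInMeasure μ f l u) (hg : TendstoInMeasure μ g l v) :
    TendstoInMeasure μ (fun i x => (f i x, g i x)) l (fun x => (u x, v x)) := by
  intro ε hε
  have hsum := (hf ε hε).add (hg ε hε)
  rw [add_zero] at hsum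
  refine tendsto_of_tendsto_of_tendsto_of_le_of_le tendsto_const_nhds hsum (fun _ => zero_le)
    fun i => (measure_mono fun x hx => ?_).trans (measure_union_le _ _)
  simpa only [Set.mem_ofPred_eq, Prod.edist_eq, le_max_iff, Set.mem_union] using hx

lemma comp_continuousAt [PseudoMetricSpace E] [PseudoMetricSpace F] {f : ι → α → E} {c : E}
    {h : E → F} (hf : TendstoInMeasure μ f l fun _ => c) (hh : ContinuousAt h c) :
    TendstoInMeasure μ (fun i x => h (f i x)) l fun _ => h c := by
  rw [tendstoInMeasure_iff_dist] at hf ⊢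
  intro ε hε
  obtain ⟨δ, hδ, hδε⟩ := Metric.continuousAt_iff.1 hh ε hε
  refine tendsto_of_tendsto_of_tendsto_of_le_of_le tendsto_const_nhds (hf δ hδ)
    (fun _ => zero_le) fun i => measure_mono fun x hx => ?_
  by_contra hlt
  exact (not_le.2 (hδε (not_le.1 hlt))) hx

end MeasureTheory.TendstoInMeasure

def BoundedInProbability {ι Ω E : Type*} [MeasurableSpace Ω] [Norm E] (P : Measure Ω)
    (X : ι → Ω → E) (l : Filter ι) : Prop :=
  ∀ ε : ENNReal, 0 < ε → ∃ M : ℝ, ∀ᶠ n in l, P {ω | M ≤ ‖X n ω‖} ≤ ε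

lemma MeasureTheory.TendstoInDistribution.boundedInProbability {ι Ω E : Type*} [MeasurableSpace Ω]
    {P : Measure Ω} [IsProbabilityMeasure P] [NormedAddCommGroup E] [CompleteSpace E]
    [SecondCountableTopology E] [MeasurableSpace E] [BorelSpace E] {ν : Measure E}
    [IsProbabilityMeasure ν] {X : ι → Ω → E} {l : Filter ι}
    (hX : TendstoInDistribution X l id (fun _ => P) ν) : BoundedInProbability P X l := by
  intro ε hε
  have htail : Tendsto (fun r : ℝ => ν {x | r < ‖x‖}) atTop (𝓝 0) := by
    simpa using tendsto_measure_norm_gt_of_isTightMeasureSet (isTightMeasureSet_singleton (μ := ν))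
  obtain ⟨r, hr⟩ := (htail.eventually_lt_const hε).exists
  refine ⟨r + 1, ?_⟩
  have hclosed : IsClosed {x : E | r + 1 ≤ ‖x‖} := isClosed_le continuous_const continuous_norm
  have hlimsup := ProbabilityMeasure.limsup_measure_closed_le_of_tendsto hX.tendsto hclosed
  have hlt : (ν.map id) {x : E | r + 1 ≤ ‖x‖} < ε := by
    refine lt_of_le_of_lt (measure_mono fun x (hx : r + 1 ≤ ‖x‖) => ?_) (by simpa using hr)
    show r < ‖x‖
    linarith
  filter_upwards [eventually_lt_of_limsup_lt (hlimsup.trans_lt hlt)] with n hn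
  rw [ProbabilityMeasure.coe_mk, Measure.map_apply_of_aemeasurable (hX.forall_aemeasurable n)
    hclosed.measurableSet] at hn
  exact hn.le

lemma tendstoInMeasure_sub_of_norm_sub_le_mul {ι Ω E : Type*} [MeasurableSpace Ω]
    {P : Measure Ω} [SeminormedAddCommGroup E] {X Y : ι → Ω → E} {A : ι → Ω → ℝ}
    {l : Filter ι} (hX : BoundedInProbability P X l) (hA : TendstoInMeasure P A l 0)
    (hYX : Tendsto (fun n => P {ω | A n ω * ‖Y n ω‖ < ‖Y n ω - X n ω‖}) l (𝓝 0)) :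
    TendstoInMeasure P (Y - X) l 0 := by
  rw [tendstoInMeasure_iff_norm] at hA ⊢
  intro δ hδ
  simp only [Pi.sub_apply, Pi.zero_apply, sub_zero] at hA ⊢
  rw [ENNReal.tendsto_nhds_zero]
  intro ε hε
  obtain ⟨M, hM⟩ := hX (ε / 2) (ENNReal.half_pos hε.ne')
  -- `η ≤ 1/2` gives `‖Y‖ ≤ 2 ‖X‖ ≤ 2 |M|`, then `η ≤ δ / (2 |M| + 1)` gives `‖Y - X‖ < δ`.
  set η := min (1 / 2) (δ / (2 * |M| + 1))
  have hη : 0 < η := lt_min one_half_pos (by positivity)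
  have hsmall := ENNReal.tendsto_nhds_zero.1 (by simpa using (hA η hη).add hYX) (ε / 2)
    (ENNReal.half_pos hε.ne')
  filter_upwards [hM, hsmall] with n hMn hsmalln
  have hsub : {ω | δ ≤ ‖Y n ω - X n ω‖} ⊆ ({ω | η ≤ ‖A n ω‖} ∪
      {ω | A n ω * ‖Y n ω‖ < ‖Y n ω - X n ω‖}) ∪ {ω | M ≤ ‖X n ω‖} := by
    intro ω hω
    by_contra hgood
    simp only [Set.mem_union, Set.mem_ofPred_eq, not_or, not_le, not_lt] at hω hgood
    obtain ⟨⟨hAη, hYX⟩, hXM⟩ := hgood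
    have hYX' : ‖Y n ω - X n ω‖ ≤ |A n ω| * ‖Y n ω‖ :=
      hYX.trans (mul_le_mul_of_nonneg_right (le_abs_self _) (norm_nonneg _))
    rw [Real.norm_eq_abs] at hAη
    have hY : ‖Y n ω‖ ≤ 2 * ‖X n ω‖ :=
      norm_le_two_mul_of_norm_sub_le_mul ((hAη.trans_le (min_le_left _ _)).le) hYX'
    have hηδ : η * (2 * |M| + 1) ≤ δ := (le_div_iff₀ (by positivity)).1 (min_le_right _ _)
    have hM' : ‖X n ω‖ ≤ |M| := hXM.le.trans (le_abs_self M)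
    nlinarith [abs_nonneg (A n ω), norm_nonneg (Y n ω), norm_nonneg (X n ω)]
  calc P {ω | δ ≤ ‖Y n ω - X n ω‖}
      ≤ P {ω | η ≤ ‖A n ω‖} + P {ω | A n ω * ‖Y n ω‖ < ‖Y n ω - X n ω‖}
        + P {ω | M ≤ ‖X n ω‖} :=
        (measure_mono hsub).trans ((measure_union_le _ _).trans
          (add_le_add_left (measure_union_le _ _) _))
    _ ≤ ε / 2 + ε / 2 := add_le_add hsmalln hMn
    _ = ε := ENNReal.add_halves ε

section

variable {Ω : Type*} [MeasurableSpace Ω] {P : Measure Ω}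

/- `CvgInDistrib` does not ask `Z n` to be measurable. Against the test function
`arctan (x i) + 2 > 0` the limit integral is positive, so the integrals along `Z n` are eventually
nonzero; a non-integrable integrand would give the junk value `0`. -/
lemma CvgInDistrib.eventually_aemeasurable {ι : Type*} [Fintype ι] {Z : ℕ → Ω → ι → ℝ}
    {ν : Measure (ι → ℝ)} [IsProbabilityMeasure ν] (hZ : CvgInDistrib P Z ν) :
    ∀ᶠ n in atTop, AEMeasurable (Z n) P := by
  have hcoord (i : ι) : ∀ᶠ n in atTop, AEMeasurable (fun ω => Z n ω i) P := by
    obtain ⟨f, hf⟩ : ∃ f : BoundedContinuousFunction (ι → ℝ) ℝ,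
        ∀ x, f x = Real.arctan (x i) + 2 :=
      ⟨.ofNormedAddCommGroup (fun x => Real.arctan (x i) + 2) (by fun_prop) 4 fun x => by
        have := Real.arctan_lt_pi_div_two (x i)
        have := Real.neg_pi_div_two_lt_arctan (x i)
        rw [Real.norm_eq_abs, abs_le]; constructor <;> linarith [Real.pi_le_four], fun _ => rfl⟩
    have hf_ge (x : ι → ℝ) : 1 / 4 ≤ f x := by
      linarith [hf x, Real.neg_pi_div_two_lt_arctan (x i), Real.pi_lt_d2]
    have hpos : 0 < ∫ x, f x ∂ν := by
      calc (0 : ℝ) < ∫ _, 1 / 4 ∂ν := by simp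
        _ ≤ ∫ x, f x ∂ν := integral_mono (integrable_const _) (f.integrable ν) hf_ge
    filter_upwards [(hZ f).eventually_const_lt hpos] with n hn
    have hint : Integrable (fun ω => f (Z n ω)) P := by
      by_contra h
      rw [integral_undef h] at hn
      exact hn.false
    have hemb : MeasurableEmbedding fun t : ℝ => Real.arctan t + 2 :=
      (by fun_prop : Continuous fun t : ℝ => Real.arctan t + 2).measurableEmbedding
        fun s t hst => Real.arctan_strictMono.injective (add_right_cancel hst)
    refine hemb.aemeasurable_comp_iff.1 ?_
    simpa only [Function.comp_def, hf] using hint.aemeasurable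
  filter_upwards [(eventually_all (ι := ι)).2 hcoord] with n hn
  exact aemeasurable_pi_lambda _ hn

variable {E : Type*} [MeasurableSpace E]

lemma cvgInDistrib_add_nat_iff [PseudoMetricSpace E] {Z : ℕ → Ω → E} {ν : Measure E} (N : ℕ) :
    CvgInDistrib P (fun n => Z (n + N)) ν ↔ CvgInDistrib P Z ν :=
  forall_congr' fun f => tendsto_add_atTop_iff_nat (f := fun n => ∫ ω, f (Z n ω) ∂P) N

lemma CvgInDistrib.comp_continuous [PseudoMetricSpace E] [BorelSpace E] {F : Type*}
    [PseudoMetricSpace F] [MeasurableSpace F] [BorelSpace F] {Z : ℕ → Ω → E} {ν : Measure E}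
    (hZ : CvgInDistrib P Z ν) {g : E → F} (hg : Continuous g) :
    CvgInDistrib P (fun n ω => g (Z n ω)) (ν.map g) := by
  intro f
  rw [integral_map hg.aemeasurable f.continuous.aestronglyMeasurable]
  exact hZ (f.compContinuous ⟨g, hg⟩)

lemma cvgInDistrib_iff_tendstoInDistribution [PseudoMetricSpace E] [BorelSpace E]
    [IsProbabilityMeasure P] {Z : ℕ → Ω → E} {ν : Measure E} [IsProbabilityMeasure ν]
    (hZ : ∀ n, AEMeasurable (Z n) P) :
    CvgInDistrib P Z ν ↔ TendstoInDistribution Z atTop id (fun _ => P) ν := by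
  refine ⟨fun h => ⟨hZ, aemeasurable_id,
    ProbabilityMeasure.tendsto_iff_forall_integral_tendsto.2 fun f => ?_⟩, fun h f => ?_⟩
  · simpa [integral_map (hZ _) f.continuous.aestronglyMeasurable] using h f
  · simpa [integral_map (hZ _) f.continuous.aestronglyMeasurable] using
      ProbabilityMeasure.tendsto_iff_forall_integral_tendsto.1 h.tendsto f

lemma CvgInDistrib.exists_tendstoInDistribution_add_nat [PseudoMetricSpace E] [BorelSpace E]
    [IsProbabilityMeasure P] {Z : ℕ → Ω → E} {ν : Measure E} [IsProbabilityMeasure ν]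
    (hZ : CvgInDistrib P Z ν) (hZm : ∀ᶠ n in atTop, AEMeasurable (Z n) P) :
    ∃ N, TendstoInDistribution (fun n => Z (n + N)) atTop id (fun _ => P) ν := by
  obtain ⟨N, hN⟩ := eventually_atTop.1 hZm
  have hm : ∀ n, AEMeasurable (Z (n + N)) P := fun n => hN _ (Nat.le_add_left N n)
  exact ⟨N, (cvgInDistrib_iff_tendstoInDistribution hm).1 ((cvgInDistrib_add_nat_iff N).2 hZ)⟩

lemma CvgInDistrib.boundedInProbability [NormedAddCommGroup E] [CompleteSpace E]
    [SecondCountableTopology E] [BorelSpace E] [IsProbabilityMeasure P] {Z : ℕ → Ω → E}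
    {ν : Measure E} [IsProbabilityMeasure ν] (hZ : CvgInDistrib P Z ν)
    (hZm : ∀ᶠ n in atTop, AEMeasurable (Z n) P) : BoundedInProbability P Z atTop := by
  obtain ⟨N, hN⟩ := hZ.exists_tendstoInDistribution_add_nat hZm
  intro ε hε
  obtain ⟨M, hM⟩ := hN.boundedInProbability ε hε
  exact ⟨M, by rwa [← map_add_atTop_eq_nat N]⟩

lemma CvgInDistrib.of_tendstoInMeasure_sub [SeminormedAddCommGroup E]
    [SecondCountableTopology E] [BorelSpace E] [IsProbabilityMeasure P] {X Y : ℕ → Ω → E}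
    {ν : Measure E} [IsProbabilityMeasure ν] (hX : CvgInDistrib P X ν)
    (hXm : ∀ᶠ n in atTop, AEMeasurable (X n) P) (hY : ∀ n, AEMeasurable (Y n) P)
    (hXY : TendstoInMeasure P (Y - X) atTop 0) : CvgInDistrib P Y ν := by
  obtain ⟨N, hN⟩ := hX.exists_tendstoInDistribution_add_nat hXm
  rw [← cvgInDistrib_add_nat_iff N, cvgInDistrib_iff_tendstoInDistribution fun n => hY _]
  exact tendstoInDistribution_of_tendstoInMeasure_sub _ _ hN
    (hXY.comp (tendsto_add_atTop_nat N)) fun n => hY _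

end

/-- If `Wₙ = Tₙ Δₙ + Rₙ`, `Tₙ → T∞` in probability with `T∞` invertible,
`√n Wₙ ⇒ N(0,S) = μ`, the remainder satisfies `‖Rₙ‖ ≤ ‖Δₙ‖ R(‖Δₙ‖)` with probability
tending to one for a continuous `R` with `R 0 = 0`, and `Δₙ → 0` in probability, then
`√n Δₙ ⇒ N(0, T∞⁻¹ S T∞⁻ᵀ)`, the pushforward of `μ` under `x ↦ T∞⁻¹ x`. -/
theorem stmt3 {d : ℕ} {Ω : Type*} [MeasurableSpace Ω] (P : Measure Ω) [IsProbabilityMeasure P]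
    (W Δ Rrem : ℕ → Ω → (Fin d → ℝ)) (T : ℕ → Ω → (Fin d → Fin d → ℝ))
    (Tinf : Fin d → Fin d → ℝ) (hTinf : IsUnit (Matrix.of Tinf).det)
    (hdecomp : ∀ n ω, W n ω = (Matrix.of (T n ω)).mulVec (Δ n ω) + Rrem n ω)
    (hT : TendstoInMeasure P T atTop (fun _ => Tinf))
    (hTmeas : ∀ n, Measurable (T n)) (hΔmeas : ∀ n, Measurable (Δ n))
    (μ : Measure (Fin d → ℝ)) [IsProbabilityMeasure μ]
    (hW : CvgInDistrib P (fun n ω => Real.sqrt n • W n ω) μ)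
    (Rfun : ℝ → ℝ) (hRcont : Continuous Rfun) (hR0 : Rfun 0 = 0)
    (hrem : Tendsto
      (fun n => P {ω | ‖Rrem n ω‖ ≤ ‖Δ n ω‖ * Rfun ‖Δ n ω‖}) atTop (𝓝 1))
    (hΔ : TendstoInMeasure P Δ atTop 0) :
    CvgInDistrib P (fun n ω => Real.sqrt n • Δ n ω)
      (μ.map fun x => (Matrix.of Tinf)⁻¹.mulVec x) := by
  -- `Matrix` has no norm instance: `Tinv` is `T∞⁻¹` as a plain function, with the sup norm.
  set Tinv : Fin d → Fin d → ℝ := Matrix.of.symm (Matrix.of Tinf)⁻¹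
  have hTinv v : Matrix.of Tinv *ᵥ (Matrix.of Tinf *ᵥ v) = v := by
    rw [Matrix.mulVec_mulVec, Equiv.apply_symm_apply, Matrix.nonsing_inv_mul _ hTinf,
      Matrix.one_mulVec]
  have hL : Continuous fun x : Fin d → ℝ => (Matrix.of Tinf)⁻¹ *ᵥ x := by fun_prop
  have := Measure.isProbabilityMeasure_map (μ := μ) hL.aemeasurable
  have hVm := hW.eventually_aemeasurable
  have hX := hW.comp_continuous hL
  have hXm := hVm.mono fun n h => hL.measurable.comp_aemeasurable h
  refine hX.of_tendstoInMeasure_sub hXm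
    (fun n => ((hΔmeas n).const_smul (Real.sqrt n)).aemeasurable) ?_
  refine tendstoInMeasure_sub_of_norm_sub_le_mul (hX.boundedInProbability hXm)
    (A := fun n ω => d * ‖Tinv‖ * (d * ‖Tinf - T n ω‖ + Rfun ‖Δ n ω‖)) ?_ ?_
  · have := (hT.prodMk hΔ).comp_continuousAt (c := (Tinf, 0))
      (h := fun p => d * ‖Tinv‖ * (d * ‖Tinf - p.1‖ + Rfun ‖p.2‖)) (by fun_prop)
    simp only [sub_self, norm_zero, hR0, mul_zero, add_zero] at this
    exact this
  · refine tendsto_measure_of_subset_compl ?_ hrem fun n ω hbad hgood => ?_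
    -- `P sᶜ = 1 - P s` needs `s` null-measurable; `Rrem n = Wₙ - Tₙ Δₙ` is so once `Wₙ` is.
    · filter_upwards [hVm, eventually_gt_atTop 0] with n hVn hn
      have hWn := (aemeasurable_const_smul_iff₀ (Real.sqrt_pos.2 (Nat.cast_pos.2 hn)).ne').1 hVn
      have hΔn := hΔmeas n
      exact nullMeasurableSet_le
        (aemeasurable_of_eq_mulVec_add hWn (hTmeas n) hΔn (hdecomp n)).norm (by fun_prop)
    · have hlin := norm_smul_sub_mulVec_le_of_leftInverse (T := T n ω) hTinv
        (Real.sqrt_nonneg n) hgood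
      rw [Fintype.card_fin, ← hdecomp] at hlin
      exact (Set.mem_ofPred_eq ▸ hbad).not_ge hlin
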